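/- arXiv:2412.07789 — 5 statements merged into one kernel-verified Lean document; each statement's English description precedes it below -/
import Mathlib

section
/- If P' = P ∪ {x} with x ∉ P, then for p ∈ P the core distance of p changes (cd_{P'}(p) < cd_P(p) or equivalently strictly decreases) only if dist(p,x) < cd_P(p); consequently, every point whose core distance strictly decreases upon inserting x has x among its minPts nearest neighbors in P', i.e., is a reverse minPts-nearest neighbor of x. -/
/-!
The sorted distances from `p` to `insert x P \ {p}` arise from those to `P \ {p}` by an ordered
insertion of `dist p x`. An ordered insertion leaves the entries before the inserted value in
place and puts only values `≥ dist p x` from there on, so an entry that drops must be `≥ dist p x`.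
-/

open scoped Classical

/-- The core distance of `p` w.r.t. a finite point set `P`: the `minPts`-th smallest
distance from `p` to the points of `P \\ {p}` (1-indexed, via the sorted list of
distances). -/
noncomputable def coreDist {d : ℕ} (minPts : ℕ) (P : Finset (EuclideanSpace ℝ (Fin d)))
    (p : EuclideanSpace ℝ (Fin d)) : ℝ :=
  (((P.erase p).val.map (fun q => dist p q)).sort (· ≤ ·)).getD (minPts - 1) 0

namespace List

theorem Pairwise.le_getD_orderedInsert_of_getD_lt {α : Type*} [LinearOrder α] {L : List α}
    (hL : L.Pairwise (· ≤ ·)) {a d : α} {k : ℕ}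
    (h : (L.orderedInsert (· ≤ ·) a).getD k d < L.getD k d) :
    a ≤ (L.orderedInsert (· ≤ ·) a).getD k d := by
  induction L generalizing k with
  | nil => cases k <;> simp_all
  | cons b l ih =>
    by_cases hab : a ≤ b
    · rw [orderedInsert_cons_of_le _ _ hab] at h ⊢
      cases k with
      | zero => simp
      | succ j =>
        simp only [getD_cons_succ] at h ⊢
        have hj : j < (b :: l).length := by
          by_contra! hj
          rw [getD_eq_default _ _ hj, getD_eq_default _ _ (Nat.le_of_succ_le hj)] at h
          exact h.false
        rw [getD_eq_getElem _ _ hj]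
        rcases mem_cons.1 (getElem_mem hj) with hb | hl
        · exact hab.trans_eq hb.symm
        · exact hab.trans ((pairwise_cons.1 hL).1 _ hl)
    · rw [orderedInsert_of_not_le _ _ hab] at h ⊢
      cases k with
      | zero => simp at h
      | succ j => exact ih hL.of_cons h

end List

theorem Multiset.sort_cons_eq_orderedInsert {α : Type*} (r : α → α → Prop) [DecidableRel r]
    [IsTrans α r] [Std.Antisymm r] [Std.Total r] (a : α) (s : Multiset α) :
    sort (a ::ₘ s) r = (sort s r).orderedInsert r a :=
  Quot.inductionOn s fun _ => by simp [List.mergeSort_eq_insertionSort]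

theorem coreDist_insert {d : ℕ} (minPts : ℕ) {P : Finset (EuclideanSpace ℝ (Fin d))}
    {x p : EuclideanSpace ℝ (Fin d)} (hxp : x ≠ p) (hx : x ∉ P) :
    coreDist minPts (insert x P) p =
      ((((P.erase p).val.map (dist p ·)).sort (· ≤ ·)).orderedInsert (· ≤ ·) (dist p x)).getD
        (minPts - 1) 0 := by
  have hx' : x ∉ P.erase p := fun h => hx (Finset.mem_of_mem_erase h)
  rw [coreDist, Finset.erase_insert_of_ne hxp, Finset.insert_val_of_notMem hx', Multiset.map_cons,
    Multiset.sort_cons_eq_orderedInsert]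

theorem coreDist_decrease_rknn_general {d : ℕ} (minPts : ℕ)
    (P : Finset (EuclideanSpace ℝ (Fin d))) (x p : EuclideanSpace ℝ (Fin d))
    (hx : x ∉ P) (hp : p ∈ P)
    (hdec : coreDist minPts (insert x P) p < coreDist minPts P p) :
    dist p x < coreDist minPts P p ∧ dist p x ≤ coreDist minPts (insert x P) p := by
  have hxp : x ≠ p := fun h => hx (h ▸ hp)
  have hle : dist p x ≤ coreDist minPts (insert x P) p := by
    rw [coreDist_insert minPts hxp hx] at hdec ⊢
    exact (Multiset.pairwise_sort _ _).le_getD_orderedInsert_of_getD_lt hdec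
  exact ⟨hle.trans_lt hdec, hle⟩

/-- If inserting `x` strictly decreases the core distance of `p`, then
`dist p x < coreDist minPts P p`; consequently `p` is a reverse `minPts`-nearest
neighbor of `x` in `insert x P`, i.e. `dist p x ≤ coreDist minPts (insert x P) p`. -/
theorem coreDist_decrease_rknn {d : ℕ} (minPts : ℕ) (hminPts : 1 ≤ minPts)
    (P : Finset (EuclideanSpace ℝ (Fin d))) (x p : EuclideanSpace ℝ (Fin d))
    (hx : x ∉ P) (hp : p ∈ P) (hcard : minPts < P.card)
    (hdec : coreDist minPts (insert x P) p < coreDist minPts P p) :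
    dist p x < coreDist minPts P p ∧ dist p x ≤ coreDist minPts (insert x P) p :=
  coreDist_decrease_rknn_general minPts P x p hx hp hdec
end

section
/- Deleting a point x from P changes the core distance of p ∈ P \ {x} only if p is a reverse minPts-nearest neighbor of x: if dist(p,x) > cd_P(p) then cd_{P\{x}}(p) = cd_P(p). -/
open scoped Classical

/-!
Removing `x` removes the single entry `dist p x` from the multiset of distances seen from `p`.
In the sorted list, inserting a value `a` leaves every entry that is smaller than `a` at its
position, so the `minPts`-th entry is unaffected as long as it lies below `dist p x`.
-/

namespace List

variable {α : Type*} [LinearOrder α]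

theorem getD_orderedInsert_of_lt {a d : α} :
    ∀ {l : List α} {k : ℕ}, l.Pairwise (· ≤ ·) →
      (l.orderedInsert (· ≤ ·) a).getD k d < a →
      (l.orderedInsert (· ≤ ·) a).getD k d = l.getD k d
  | [], 0, _, hlt => by simp at hlt
  | [], _ + 1, _, _ => by simp
  | b :: t, k, hs, hlt => by
    by_cases hab : a ≤ b
    · rw [orderedInsert_cons_of_le _ _ hab] at hlt ⊢
      rcases k with _ | n
      · simp at hlt
      rw [getD_cons_succ] at hlt ⊢
      rcases lt_or_ge n (b :: t).length with hn | hn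
      · have hb : b ≤ (b :: t)[n] := by
          rcases n with _ | m
          · exact le_rfl
          · exact rel_of_pairwise_cons hs (getElem_mem _)
        rw [getD_eq_getElem _ _ hn] at hlt
        exact absurd hlt (not_lt.2 (hab.trans hb))
      · rw [getD_eq_default _ _ hn, getD_eq_default _ _ (by simp at hn ⊢; omega)]
    · rw [orderedInsert_of_not_le _ _ hab] at hlt ⊢
      rcases k with _ | n
      · rfl
      · exact getD_orderedInsert_of_lt (pairwise_cons.1 hs).2 hlt

end List

namespace Multiset

variable {α : Type*} [LinearOrder α]

theorem sort_cons_eq_orderedInsert_s7 (a : α) (s : Multiset α) :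
    (a ::ₘ s).sort (· ≤ ·) = (s.sort (· ≤ ·)).orderedInsert (· ≤ ·) a :=
  Quot.inductionOn s fun l => by simp [List.mergeSort_eq_insertionSort]

theorem getD_sort_cons_of_lt {a d : α} {s : Multiset α} {k : ℕ}
    (h : ((a ::ₘ s).sort (· ≤ ·)).getD k d < a) :
    ((a ::ₘ s).sort (· ≤ ·)).getD k d = (s.sort (· ≤ ·)).getD k d := by
  rw [sort_cons_eq_orderedInsert_s7] at h ⊢
  exact List.getD_orderedInsert_of_lt (pairwise_sort s _) h

end Multiset

theorem coreDist_erase_eq_of_far_general {d : ℕ} (minPts : ℕ)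
    (P : Finset (EuclideanSpace ℝ (Fin d))) (x p : EuclideanSpace ℝ (Fin d))
    (hx : x ∈ P) (hp : p ∈ P.erase x)
    (hfar : coreDist minPts P p < dist p x) :
    coreDist minPts (P.erase x) p = coreDist minPts P p := by
  have hxp : x ∈ P.erase p := Finset.mem_erase.2 ⟨(Finset.ne_of_mem_erase hp).symm, hx⟩
  have hsplit : (P.erase p).val = x ::ₘ ((P.erase x).erase p).val := by
    rw [Finset.erase_right_comm]
    exact (Multiset.cons_erase hxp).symm
  unfold coreDist at hfar ⊢
  rw [hsplit, Multiset.map_cons] at hfar ⊢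
  exact (Multiset.getD_sort_cons_of_lt hfar).symm

/-- Deleting `x` changes the core distance of `p` only if `p` is a reverse
`minPts`-nearest neighbor of `x`: if `dist p x` exceeds `coreDist minPts P p`, the core
distance of `p` is unchanged by the deletion of `x`. -/
theorem coreDist_erase_eq_of_far {d : ℕ} (minPts : ℕ) (hminPts : 1 ≤ minPts)
    (P : Finset (EuclideanSpace ℝ (Fin d))) (x p : EuclideanSpace ℝ (Fin d))
    (hx : x ∈ P) (hp : p ∈ P.erase x) (hcard : minPts + 1 < P.card)
    (hfar : coreDist minPts P p < dist p x) :
    coreDist minPts (P.erase x) p = coreDist minPts P p :=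
  coreDist_erase_eq_of_far_general minPts P x p hx hp hfar
end

section
/- Reduction rule for MST under edge-weight decreases and vertex insertion: let G = (V, E, w) be a connected weighted graph with minimum spanning tree T, and let G' = (V, E, w') be the same graph where w'(e) ≤ w(e) for all e, with equality except on a subset D ⊆ E. Then G' has a minimum spanning tree T' with T' ⊆ T ∪ D. -/
open scoped Classical

/-- `T` is a spanning tree of the graph on vertex set `V` with edge set `E`:
`T ⊆ E` and the graph with edge set `T` is a tree on `V` (connected and acyclic). -/
def IsSpanningTree {V : Type*} [Fintype V] (E T : Finset (Sym2 V)) : Prop :=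
  T ⊆ E ∧ (SimpleGraph.fromEdgeSet (↑T : Set (Sym2 V))).IsTree

/-- `T` is a minimum spanning tree of the weighted graph `(V, E, w)`. -/
noncomputable def IsMST {V : Type*} [Fintype V] (w : Sym2 V → ℝ)
    (E T : Finset (Sym2 V)) : Prop :=
  IsSpanningTree E T ∧ ∀ T', IsSpanningTree E T' → ∑ e ∈ T, w e ≤ ∑ e ∈ T', w e


/-!
Among the minimum spanning trees for `w'`, take one, `T'`, with the fewest edges outside `T ∪ D`,
and suppose `e ∈ T'` lies outside `T ∪ D`, so that `w' e = w e`. By the symmetric exchange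
property of spanning trees there is `f ∈ T` such that both `T' - e + f` and `T - f + e` are
spanning trees. Minimality of `T` gives `w f ≤ w e`, minimality of `T'` gives `w' e ≤ w' f`, and
`w' f ≤ w f`; hence `T' - e + f` is again minimum for `w'`, with fewer edges outside `T ∪ D`.
A loop `e` (invisible to `fromEdgeSet`) is handled the same way with no `f`: it has weight `0`.
-/

open Finset

namespace SimpleGraph

variable {V : Type*} {G H K : SimpleGraph V} {a b u v : V}

lemma Walk.reachable_deleteEdges_or (p : G.Walk u a) (b : V) :
    (G.deleteEdges {s(a, b)}).Reachable u a ∨ (G.deleteEdges {s(a, b)}).Reachable u b := by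
  induction p with
  | nil => exact .inl .rfl
  | @cons x y a hxy q ih =>
    by_cases hab : s(x, y) = s(a, b)
    · rcases Sym2.eq_iff.mp hab with ⟨rfl, -⟩ | ⟨rfl, -⟩
      · exact .inl .rfl
      · exact .inr .rfl
    · have hxy' : (G.deleteEdges {s(a, b)}).Adj x y := by simp [hxy, hab]
      exact ih.imp hxy'.reachable.trans hxy'.reachable.trans

/-- Deleting `ab` splits the tree into the side of `a` and the side of `b`; as `u` and `v` lie on
different sides, `uv` joins them again. -/
lemma IsTree.isTree_deleteEdges_sup_edge (hG : G.IsTree)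
    (huv : ¬ (G.deleteEdges {s(a, b)}).Reachable u v) :
    (G.deleteEdges {s(a, b)} ⊔ edge u v).IsTree := by
  set G' := G.deleteEdges {s(a, b)}
  have hside : ∀ x, G'.Reachable x a ∨ G'.Reachable x b := fun x =>
    (hG.connected.preconnected x a).elim (·.reachable_deleteEdges_or b)
  have hle : G' ≤ G' ⊔ edge u v := le_sup_left
  have hne : u ≠ v := by rintro rfl; exact huv .rfl
  have huv' : (G' ⊔ edge u v).Reachable u v := Adj.reachable (by simp [edge_adj, hne])
  have hab : (G' ⊔ edge u v).Reachable a b := by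
    rcases hside u with hu | hu <;> rcases hside v with hv | hv
    · exact absurd (hu.trans hv.symm) huv
    · exact (hu.mono hle).symm.trans (huv'.trans (hv.mono hle))
    · exact (hv.mono hle).symm.trans (huv'.symm.trans (hu.mono hle))
    · exact absurd (hu.trans hv.symm) huv
  have hreach : ∀ x, (G' ⊔ edge u v).Reachable a x := fun x =>
    ((hside x).elim (·.mono hle) (fun h => (h.mono hle).trans hab.symm)).symm
  exact ⟨(connected_iff_exists_forall_reachable _).mpr ⟨a, hreach⟩,
    (hG.isAcyclic.anti (deleteEdges_le _)).sup_edge_of_not_reachable huv⟩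

/-- The `H`-path from `u` to `v` has to cross the cut that `uv` is a bridge of in `K`; any
crossing edge `ab` can be exchanged with `uv`. -/
lemma IsTree.exists_exchange (hH : H.IsTree) (hK : K.IsTree) (huv : K.Adj u v) :
    ∃ a b, H.Adj a b ∧ ¬ (K.deleteEdges {s(u, v)}).Adj a b ∧
      (K.deleteEdges {s(u, v)} ⊔ edge a b).IsTree ∧
      (H.deleteEdges {s(a, b)} ⊔ edge u v).IsTree := by
  set K' := K.deleteEdges {s(u, v)}
  obtain ⟨p, hp, hp_unique⟩ := hH.existsUnique_path u v
  have hcut : ¬ K'.Reachable u v := isAcyclic_iff_forall_adj_isBridge.mp hK.isAcyclic huv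
  obtain ⟨d, hd, hua, hub⟩ := p.exists_boundary_dart {x | K'.Reachable u x} .rfl hcut
  have hab : ¬ K'.Reachable d.fst d.snd := fun hab => hub (hua.trans hab)
  have huv' : ¬ (H.deleteEdges {s(d.fst, d.snd)}).Reachable u v := fun h => by
    obtain ⟨q, hq⟩ := reachable_deleteEdges_iff_exists_walk.mp h
    have hqp : q.bypass = p := hp_unique q.bypass q.bypass_isPath
    exact hq (q.edges_bypass_subset_edges (hqp ▸ List.mem_map_of_mem hd))
  exact ⟨d.fst, d.snd, d.adj, fun h => hab h.reachable, hK.isTree_deleteEdges_sup_edge hab,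
    hH.isTree_deleteEdges_sup_edge huv'⟩

lemma fromEdgeSet_insert_erase (S : Finset (Sym2 V)) (e : Sym2 V) (a b : V) :
    fromEdgeSet ↑(insert s(a, b) (S.erase e)) = (fromEdgeSet ↑S).deleteEdges {e} ⊔ edge a b := by
  rw [deleteEdges_fromEdgeSet, coe_insert, coe_erase, Set.insert_eq, fromEdgeSet_union, sup_comm,
    edge]

lemma fromEdgeSet_insert_of_isDiag {e : Sym2 V} (he : e.IsDiag) (s : Set (Sym2 V)) :
    fromEdgeSet (insert e s) = fromEdgeSet s := by
  ext x y
  simp only [fromEdgeSet_adj, Set.mem_insert_iff, or_and_right, or_iff_right_iff_imp, and_imp]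
  rintro rfl hxy
  exact absurd (Sym2.mk_isDiag_iff.mp he) hxy

lemma fromEdgeSet_diff_singleton_of_isDiag {e : Sym2 V} (he : e.IsDiag) (s : Set (Sym2 V)) :
    fromEdgeSet (s \ {e}) = fromEdgeSet s := by
  rw [← fromEdgeSet_insert_of_isDiag he, Set.insert_sdiff_singleton, fromEdgeSet_insert_of_isDiag he]

end SimpleGraph

section

open SimpleGraph

variable {V : Type*} [Fintype V] {E T T' : Finset (Sym2 V)} {e : Sym2 V}

namespace IsSpanningTree

lemma insert_of_isDiag (hT : IsSpanningTree E T) (heE : e ∈ E) (he : e.IsDiag) :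
    IsSpanningTree E (insert e T) :=
  ⟨insert_subset heE hT.1, by rw [coe_insert, fromEdgeSet_insert_of_isDiag he]; exact hT.2⟩

lemma erase_of_isDiag (hT : IsSpanningTree E T) (he : e.IsDiag) :
    IsSpanningTree E (T.erase e) :=
  ⟨(erase_subset _ _).trans hT.1,
    by rw [coe_erase, fromEdgeSet_diff_singleton_of_isDiag he]; exact hT.2⟩

theorem exists_exchange (hT : IsSpanningTree E T) (hT' : IsSpanningTree E T') (he : e ∈ T')
    (hne : ¬ e.IsDiag) :
    ∃ f ∈ T, f ∉ T'.erase e ∧ IsSpanningTree E (insert f (T'.erase e)) ∧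
      IsSpanningTree E (insert e (T.erase f)) := by
  induction e using Sym2.ind with | h u v => ?_
  have huv : (fromEdgeSet (↑T' : Set (Sym2 V))).Adj u v :=
    (fromEdgeSet_adj _).mpr ⟨he, fun h => hne (Sym2.mk_isDiag_iff.mpr h)⟩
  obtain ⟨a, b, hab, hnab, hK, hH⟩ := hT.2.exists_exchange hT'.2 huv
  have hfT : s(a, b) ∈ T := ((fromEdgeSet_adj _).mp hab).1
  refine ⟨s(a, b), hfT, fun h => hnab ?_,
    ⟨insert_subset (hT.1 hfT) ((erase_subset _ _).trans hT'.1), by rwa [fromEdgeSet_insert_erase]⟩,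
    ⟨insert_subset (hT'.1 he) ((erase_subset _ _).trans hT.1), by rwa [fromEdgeSet_insert_erase]⟩⟩
  rw [deleteEdges_fromEdgeSet, ← coe_erase]
  exact (fromEdgeSet_adj _).mpr ⟨h, hab.ne⟩

end IsSpanningTree

lemma exists_isMST (w : Sym2 V → ℝ) (hT : IsSpanningTree E T) : ∃ T', IsMST w E T' := by
  obtain ⟨T', hT', hmin⟩ := (E.powerset.filter (IsSpanningTree E)).exists_min_image
    (fun X => ∑ e ∈ X, w e) ⟨T, mem_filter.mpr ⟨mem_powerset.mpr hT.1, hT⟩⟩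
  exact ⟨T', (mem_filter.mp hT').2,
    fun X hX => hmin X (mem_filter.mpr ⟨mem_powerset.mpr hX.1, hX⟩)⟩

namespace IsMST

variable {w w' : Sym2 V → ℝ}

lemma of_sum_le (hT : IsMST w E T) (hT' : IsSpanningTree E T')
    (h : ∑ e ∈ T', w e ≤ ∑ e ∈ T, w e) : IsMST w E T' :=
  ⟨hT', fun X hX => h.trans (hT.2 X hX)⟩

theorem exists_isMST_subset_union_erase (hT : IsMST w E T) (hT' : IsMST w' E T')
    (hle : ∀ f ∈ T, w' f ≤ w f) (he : e ∈ T') (heT : e ∉ T) (hwe : w' e = w e) :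
    ∃ T'', IsMST w' E T'' ∧ T'' ⊆ T ∪ T'.erase e := by
  by_cases hdiag : e.IsDiag
  · have h₁ := hT.2 _ (hT.1.insert_of_isDiag (hT'.1.1 he) hdiag)
    have h₂ := hT'.2 _ (hT'.1.erase_of_isDiag hdiag)
    rw [sum_insert heT] at h₁
    rw [sum_erase_eq_sub he] at h₂
    refine ⟨T'.erase e, hT'.of_sum_le (hT'.1.erase_of_isDiag hdiag) ?_, subset_union_right⟩
    rw [sum_erase_eq_sub he]
    linarith
  · obtain ⟨f, hfT, hfT', hX, hY⟩ := hT.1.exists_exchange hT'.1 he hdiag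
    have h₁ := hT.2 _ hY
    have h₂ := hT'.2 _ hX
    rw [sum_insert (fun h => heT (mem_of_mem_erase h)), sum_erase_eq_sub hfT] at h₁
    rw [sum_insert hfT', sum_erase_eq_sub he] at h₂
    refine ⟨_, hT'.of_sum_le hX ?_, insert_subset (mem_union_left _ hfT) subset_union_right⟩
    rw [sum_insert hfT', sum_erase_eq_sub he]
    linarith [hle f hfT]

end IsMST

end

theorem mst_reduction_rule_general {V : Type*} [Fintype V]
    (w w' : Sym2 V → ℝ) (E T D : Finset (Sym2 V))
    (hT : IsMST w E T)
    (hle : ∀ e ∈ E, w' e ≤ w e)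
    (heq : ∀ e ∈ E, e ∉ D → w' e = w e) :
    ∃ T', IsMST w' E T' ∧ T' ⊆ T ∪ D := by
  obtain ⟨T₀, hT₀⟩ := exists_isMST w' hT.1
  obtain ⟨T', hT', hmin⟩ :=
    (measure fun X => #(X \ (T ∪ D))).wf.has_min {X | IsMST w' E X} ⟨T₀, hT₀⟩
  refine ⟨T', hT', fun e he => by_contra fun heTD => ?_⟩
  obtain ⟨heT, heD⟩ := not_or.mp (mem_union.not.mp heTD)
  obtain ⟨T'', hT'', hsub⟩ := hT.exists_isMST_subset_union_erase hT'
    (fun f hf => hle f (hT.1.1 hf)) he heT (heq e (hT'.1.1 he) heD)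
  refine hmin T'' hT'' (lt_of_le_of_lt (card_le_card fun x hx => ?_)
    (card_erase_lt_of_mem (mem_sdiff.mpr ⟨he, heTD⟩)))
  have := hsub (mem_sdiff.mp hx).1
  grind

/-- Reduction rule for MST under edge-weight decreases: if `T` is an MST of `(V, E, w)`
and `w'` satisfies `w' ≤ w` on `E` with equality outside a subset `D ⊆ E`, then
`(V, E, w')` has a minimum spanning tree contained in `T ∪ D`. -/
theorem mst_reduction_rule {V : Type*} [Fintype V]
    (w w' : Sym2 V → ℝ) (E T D : Finset (Sym2 V)) (hD : D ⊆ E)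
    (hT : IsMST w E T)
    (hle : ∀ e ∈ E, w' e ≤ w e)
    (heq : ∀ e ∈ E, e ∉ D → w' e = w e) :
    ∃ T', IsMST w' E T' ∧ T' ⊆ T ∪ D :=
  mst_reduction_rule_general w w' E T D hT hle heq
end

section
/- Contraction rule for MST under edge-weight increases: let G = (V, E, w) be a connected weighted graph with minimum spanning tree T, and let w' agree with w except w'(e) ≥ w(e) on a subset I ⊆ E. Then the forest F = T \ I is contained in some minimum spanning tree T' of (V, E, w'). -/
open scoped Classical

/-!
Choose a minimum spanning tree `T'` for `w'` missing as few edges of `F = T \ I` as possible, and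
suppose `e ∈ F` is not in `T'`. The `T'`-path between the ends of `e` leaves the component of one
end in `T - e` along an edge `f ∉ T`, and both `T - e + f` and `T' - f + e` are spanning trees.
Minimality of `T` gives `w e ≤ w f`, so `w' e = w e ≤ w f ≤ w' f` and `T' - f + e` is a minimum
spanning tree for `w'` missing fewer edges of `F`. A loop `e ∈ T` has weight `≤ 0` and can simply
be added to `T'`.
-/

open SimpleGraph Finset

namespace SimpleGraph

variable {V : Type*} {G G' : SimpleGraph V} {u v a b : V}

lemma Connected.reachable_or_reachable_deleteEdges (hG : G.Connected) (u v x : V) :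
    (G.deleteEdges {s(u, v)}).Reachable x u ∨ (G.deleteEdges {s(u, v)}).Reachable x v := by
  obtain ⟨p, hp⟩ := hG.exists_isPath x u
  by_cases hep : s(u, v) ∈ p.edges
  · have hvp := p.snd_mem_support_of_mem_edges hep
    have hup := Walk.endpoint_notMem_support_takeUntil hp hvp (p.adj_of_mem_edges hep).ne
    refine .inr ⟨(p.takeUntil v hvp).toDeleteEdges {s(u, v)} ?_⟩
    rintro e he rfl
    exact hup ((p.takeUntil v hvp).fst_mem_support_of_mem_edges he)
  · exact .inl ⟨p.toDeleteEdges {s(u, v)} (by rintro e he rfl; exact hep he)⟩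

lemma IsTree.sup_edge_deleteEdges (hG : G.IsTree)
    (hab : ¬(G.deleteEdges {s(u, v)}).Reachable a b) :
    (G.deleteEdges {s(u, v)} ⊔ edge a b).IsTree := by
  set H := G.deleteEdges {s(u, v)}
  have hside := hG.connected.reachable_or_reachable_deleteEdges u v
  have hle : H ≤ H ⊔ edge a b := le_sup_left
  have hne : a ≠ b := fun h => hab (h ▸ .rfl)
  have hab' : (H ⊔ edge a b).Reachable a b :=
    (le_sup_right (a := H) ((edge_adj ..).2 ⟨.inl ⟨rfl, rfl⟩, hne⟩)).reachable
  have hvu : (H ⊔ edge a b).Reachable v u := by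
    rcases hside a with ha | ha <;> rcases hside b with hb | hb
    · exact absurd (ha.trans hb.symm) hab
    · exact (hb.symm.mono hle).trans (hab'.symm.trans (ha.mono hle))
    · exact (ha.symm.mono hle).trans (hab'.trans (hb.mono hle))
    · exact absurd (ha.trans hb.symm) hab
  refine ⟨(connected_iff_exists_forall_reachable _).2 ⟨u, fun x => ?_⟩, ?_⟩
  · rcases hside x with hx | hx
    · exact (hx.mono hle).symm
    · exact ((hx.mono hle).trans hvu).symm
  · exact (hG.isAcyclic.anti (deleteEdges_le _)).sup_edge_of_not_reachable hab

lemma IsAcyclic.not_reachable_deleteEdges_of_mem_edges (hG : G.IsAcyclic) {p : G.Walk u v}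
    (hp : p.IsPath) {e : Sym2 V} (he : e ∈ p.edges) : ¬(G.deleteEdges {e}).Reachable u v := by
  rintro ⟨q⟩
  have hpr : (⟨p, hp⟩ : G.Path u v) = (q.mapLe (deleteEdges_le _)).toPath :=
    (hG.subsingleton_path u v).elim _ _
  have heq : e ∈ q.edges := by
    rw [← Walk.edges_mapLe_eq_edges (deleteEdges_le _)]
    exact Walk.edges_toPath_subset_edges _ (by rwa [← hpr])
  simpa using q.edges_subset_edgeSet heq

lemma IsBridge.exists_adj_not_reachable_deleteEdges (hb : G.IsBridge s(u, v))
    (hG' : G'.IsTree) :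
    ∃ a b, G'.Adj a b ∧ ¬(G.deleteEdges {s(u, v)}).Reachable a b ∧
      ¬(G'.deleteEdges {s(a, b)}).Reachable u v := by
  obtain ⟨p, hp⟩ := hG'.connected.exists_isPath u v
  obtain ⟨d, hd, hda, hdb⟩ :=
    p.exists_boundary_dart {x | (G.deleteEdges {s(u, v)}).Reachable u x} .rfl hb
  refine ⟨d.fst, d.snd, d.adj, fun hab => hdb (hda.trans hab), ?_⟩
  refine hG'.isAcyclic.not_reachable_deleteEdges_of_mem_edges hp ?_
  rw [Walk.edges_eq_map_darts]
  exact List.mem_map_of_mem hd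

lemma fromEdgeSet_coe_erase (A : Finset (Sym2 V)) (e : Sym2 V) :
    fromEdgeSet (↑(A.erase e) : Set (Sym2 V)) =
      (fromEdgeSet (↑A : Set (Sym2 V))).deleteEdges {e} := by
  simp

lemma fromEdgeSet_coe_insert (A : Finset (Sym2 V)) (a b : V) :
    fromEdgeSet (↑(insert s(a, b) A) : Set (Sym2 V)) =
      fromEdgeSet (↑A : Set (Sym2 V)) ⊔ edge a b := by
  rw [coe_insert, Set.insert_eq, fromEdgeSet_union, sup_comm, edge]

end SimpleGraph

lemma Finset.sum_insert_erase {α β : Type*} [DecidableEq α] [AddCommGroup β] {A : Finset α}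
    {e f : α} (w : α → β) (he : e ∈ A) (hf : f ∉ A) :
    ∑ x ∈ insert f (A.erase e), w x = ∑ x ∈ A, w x - w e + w f := by
  rw [sum_insert (fun h => hf (mem_of_mem_erase h)), sum_erase_eq_sub he, add_comm]

section SpanningTree

variable {V : Type*} [Fintype V] {E A B : Finset (Sym2 V)} {e : Sym2 V}

lemma IsSpanningTree.erase_of_isDiag_s9 (hA : IsSpanningTree E A) (he : e.IsDiag) :
    IsSpanningTree E (A.erase e) := by
  refine ⟨(erase_subset _ _).trans hA.1, ?_⟩
  rw [fromEdgeSet_coe_erase, deleteEdges_of_subset_diagSet _ (by simpa using he)]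
  exact hA.2

lemma IsSpanningTree.insert_of_isDiag_s9 (hA : IsSpanningTree E A) (heE : e ∈ E) (he : e.IsDiag) :
    IsSpanningTree E (insert e A) := by
  refine ⟨insert_subset heE hA.1, ?_⟩
  induction e with | h a b
  rw [Sym2.mk_isDiag_iff] at he
  rw [fromEdgeSet_coe_insert, he, sup_edge_self]
  exact hA.2

lemma IsSpanningTree.exists_exchange_s9 (hA : IsSpanningTree E A) (hB : IsSpanningTree E B)
    (heA : e ∈ A) (heB : e ∉ B) (he : ¬e.IsDiag) :
    ∃ f ∈ B, f ∉ A ∧ IsSpanningTree E (insert f (A.erase e)) ∧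
      IsSpanningTree E (insert e (B.erase f)) := by
  induction e with | h u v
  have huv : (fromEdgeSet (↑A : Set (Sym2 V))).Adj u v := by simpa [heA] using he
  obtain ⟨a, b, hab, hsepA, hsepB⟩ := (isAcyclic_iff_forall_adj_isBridge.1 hA.2.isAcyclic huv)
    |>.exists_adj_not_reachable_deleteEdges hB.2
  obtain ⟨hfB, hne⟩ : s(a, b) ∈ B ∧ a ≠ b := by simpa using hab
  refine ⟨s(a, b), hfB, fun hfA => hsepA (Adj.reachable ?_), ?_, ?_⟩
  · rw [deleteEdges_adj, fromEdgeSet_adj]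
    exact ⟨⟨hfA, hne⟩, fun h => heB (Set.mem_singleton_iff.1 h ▸ hfB)⟩
  · refine ⟨insert_subset (hB.1 hfB) ((erase_subset _ _).trans hA.1), ?_⟩
    rw [fromEdgeSet_coe_insert, fromEdgeSet_coe_erase]
    exact hA.2.sup_edge_deleteEdges hsepA
  · refine ⟨insert_subset (hA.1 heA) ((erase_subset _ _).trans hB.1), ?_⟩
    rw [fromEdgeSet_coe_insert, fromEdgeSet_coe_erase]
    exact hB.2.sup_edge_deleteEdges hsepB

lemma IsMST.of_sum_le_s9 {w : Sym2 V → ℝ} (hA : IsMST w E A) (hB : IsSpanningTree E B)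
    (h : ∑ x ∈ B, w x ≤ ∑ x ∈ A, w x) : IsMST w E B :=
  ⟨hB, fun S hS => h.trans (hA.2 S hS)⟩

lemma exists_isMST_forall_le {β : Type*} [LinearOrder β] (w : Sym2 V → ℝ)
    (hA : IsSpanningTree E A) (μ : Finset (Sym2 V) → β) :
    ∃ M, IsMST w E M ∧ ∀ B, IsMST w E B → μ M ≤ μ B := by
  obtain ⟨M, hM, hMmin⟩ := (E.powerset.filter (IsSpanningTree E)).exists_min_image
    (fun B => ∑ x ∈ B, w x) ⟨A, mem_filter.2 ⟨mem_powerset.2 hA.1, hA⟩⟩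
  have hMST : IsMST w E M :=
    ⟨(mem_filter.1 hM).2, fun S hS => hMmin S (mem_filter.2 ⟨mem_powerset.2 hS.1, hS⟩)⟩
  obtain ⟨N, hN, hNmin⟩ := (E.powerset.filter (IsMST w E)).exists_min_image μ
    ⟨M, mem_filter.2 ⟨mem_powerset.2 hMST.1.1, hMST⟩⟩
  exact ⟨N, (mem_filter.1 hN).2,
    fun B hB => hNmin B (mem_filter.2 ⟨mem_powerset.2 hB.1.1, hB⟩)⟩

lemma exists_isMST_mem_of_weight_increase {w w' : Sym2 V → ℝ} {T T' : Finset (Sym2 V)}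
    (hT : IsMST w E T) (hT' : IsMST w' E T') (hge : ∀ f ∈ E, w f ≤ w' f)
    (heT : e ∈ T) (heT' : e ∉ T') (hwe : w' e = w e) :
    ∃ B, IsMST w' E B ∧ e ∈ B ∧ T ∩ T' ⊆ B := by
  by_cases hd : e.IsDiag
  · have hwe_nonpos : w e ≤ 0 := by
      have := hT.2 _ (hT.1.erase_of_isDiag_s9 hd)
      rw [← sum_erase_add _ _ heT] at this
      linarith
    refine ⟨insert e T', hT'.of_sum_le_s9 (hT'.1.insert_of_isDiag_s9 (hT.1.1 heT) hd) ?_,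
      mem_insert_self _ _, fun x hx => mem_insert_of_mem (mem_inter.1 hx).2⟩
    rw [sum_insert heT']
    linarith
  · obtain ⟨f, hfT', hfT, hTf, hT'e⟩ := hT.1.exists_exchange_s9 hT'.1 heT heT' hd
    have hwef : w e ≤ w f := by
      have := hT.2 _ hTf
      rw [sum_insert_erase w heT hfT] at this
      linarith
    refine ⟨insert e (T'.erase f), hT'.of_sum_le_s9 hT'e ?_, mem_insert_self _ _, fun x hx => ?_⟩
    · rw [sum_insert_erase w' hfT' heT']
      linarith [hge f (hT'.1.1 hfT')]
    · obtain ⟨hxT, hxT'⟩ := mem_inter.1 hx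
      exact mem_insert_of_mem (mem_erase.2 ⟨ne_of_mem_of_not_mem hxT hfT, hxT'⟩)

end SpanningTree

theorem mst_contraction_rule_general {V : Type*} [Fintype V]
    (w w' : Sym2 V → ℝ) (E T I : Finset (Sym2 V))
    (hT : IsMST w E T)
    (hge : ∀ e ∈ E, w e ≤ w' e)
    (heq : ∀ e ∈ E, e ∉ I → w' e = w e) :
    ∃ T', IsMST w' E T' ∧ T \ I ⊆ T' := by
  obtain ⟨T', hT', hT'min⟩ := exists_isMST_forall_le w' hT.1 fun B => #((T \ I) \ B)
  refine ⟨T', hT', fun e heF => by_contra fun heT' => ?_⟩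
  obtain ⟨heT, heI⟩ := mem_sdiff.1 heF
  obtain ⟨B, hB, heB, hTB⟩ :=
    exists_isMST_mem_of_weight_increase hT hT' hge heT heT' (heq e (hT.1.1 heT) heI)
  have hsub : (T \ I) \ B ⊆ ((T \ I) \ T').erase e := by
    intro x hx
    obtain ⟨hxF, hxB⟩ := mem_sdiff.1 hx
    have hxT' : x ∉ T' := fun hxT' => hxB (hTB (mem_inter.2 ⟨(mem_sdiff.1 hxF).1, hxT'⟩))
    exact mem_erase.2 ⟨(ne_of_mem_of_not_mem heB hxB).symm, mem_sdiff.2 ⟨hxF, hxT'⟩⟩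
  have hlt := (card_le_card hsub).trans_lt (card_erase_lt_of_mem (mem_sdiff.2 ⟨heF, heT'⟩))
  exact (hT'min B hB).not_gt hlt

/-- Contraction rule for MST under edge-weight increases: if `T` is an MST of
`(V, E, w)` and `w'` agrees with `w` except `w' ≥ w` on a subset `I ⊆ E`, then the
forest `F = T \ I` is contained in some minimum spanning tree of `(V, E, w')`. -/
theorem mst_contraction_rule {V : Type*} [Fintype V]
    (w w' : Sym2 V → ℝ) (E T I : Finset (Sym2 V)) (hI : I ⊆ E)
    (hT : IsMST w E T)
    (hge : ∀ e ∈ E, w e ≤ w' e)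
    (heq : ∀ e ∈ E, e ∉ I → w' e = w e) :
    ∃ T', IsMST w' E T' ∧ T \ I ⊆ T' :=
  mst_contraction_rule_general w w' E T I hT hge heq
end

section
/- Single-linkage hierarchy from the MST: let G = (V, E, w) be a finite connected weighted graph with minimum spanning tree T. For any threshold ε, two vertices u, v lie in the same connected component of the subgraph of G consisting of edges of weight ≤ ε if and only if they lie in the same connected component of the subgraph of T consisting of tree edges of weight ≤ ε. -/
/-!
If an edge `xy ∈ E` of weight `≤ ε` joined two components of `T_ε`, the tree path from `x` to `y`
would contain an edge `f` of weight `> ε`, and removing `f` separates `x` from `y` in `T`.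
Exchanging `f` for `xy` then yields a spanning tree of strictly smaller weight. So every edge of
`G_ε` has its endpoints connected in `T_ε`; the converse is immediate from `T ⊆ E`.
-/

open scoped Classical

namespace SimpleGraph

variable {V : Type*} {G H : SimpleGraph V}

theorem Reachable.of_forall_adj_reachable (h : ∀ ⦃u v⦄, G.Adj u v → H.Reachable u v)
    {u v : V} (huv : G.Reachable u v) : H.Reachable u v := by
  rw [reachable_iff_reflTransGen] at huv ⊢
  exact Relation.reflTransGen_closed (fun a b hab => (reachable_iff_reflTransGen a b).1 (h hab))
    _ _ huv

theorem Reachable.deleteEdges_reachable_left_or_right {z a b : V} (h : G.Reachable z a) :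
    (G.deleteEdges {s(a, b)}).Reachable z a ∨ (G.deleteEdges {s(a, b)}).Reachable z b := by
  rw [reachable_iff_reflTransGen] at h
  induction h using Relation.ReflTransGen.head_induction_on with
  | refl => exact .inl .rfl
  | @head z z' hzz' _ ih =>
    by_cases he : s(z, z') = s(a, b)
    · rcases Sym2.eq_iff.1 he with ⟨rfl, -⟩ | ⟨rfl, -⟩
      · exact .inl .rfl
      · exact .inr .rfl
    · have hadj : (G.deleteEdges {s(a, b)}).Adj z z' := by simp [hzz', he]
      exact ih.imp hadj.reachable.trans hadj.reachable.trans

theorem IsTree.deleteEdges_sup_edge {a b x y : V} (hG : G.IsTree)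
    (hxy : ¬(G.deleteEdges {s(a, b)}).Reachable x y) :
    (G.deleteEdges {s(a, b)} ⊔ edge x y).IsTree := by
  set F := G.deleteEdges {s(a, b)}
  have hFK : F ≤ F ⊔ edge x y := le_sup_left
  have hne : x ≠ y := fun h => hxy (h ▸ .rfl)
  have hxyK : (F ⊔ edge x y).Reachable x y := Adj.reachable (by simp [edge_adj, hne])
  -- `x` and `y` each reach `a` or `b` in `F`, and not the same one since they are separated.
  have habK : (F ⊔ edge x y).Reachable a b := by
    rcases (hG.connected x a).deleteEdges_reachable_left_or_right (b := b) with hx | hx <;>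
      rcases (hG.connected y a).deleteEdges_reachable_left_or_right (b := b) with hy | hy
    · exact absurd (hx.trans hy.symm) hxy
    · exact ((hx.mono hFK).symm.trans hxyK).trans (hy.mono hFK)
    · exact ((hy.mono hFK).symm.trans hxyK.symm).trans (hx.mono hFK)
    · exact absurd (hx.trans hy.symm) hxy
  have := hG.connected.nonempty
  refine ⟨⟨fun u v => (hG.connected u v).of_forall_adj_reachable fun c d hcd => ?_⟩,
    (hG.isAcyclic.anti (deleteEdges_le _)).sup_edge_of_not_reachable hxy⟩
  by_cases he : s(c, d) = s(a, b)
  · rcases Sym2.eq_iff.1 he with ⟨rfl, rfl⟩ | ⟨rfl, rfl⟩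
    · exact habK
    · exact habK.symm
  · exact (Adj.reachable (by simp [F, hcd, he])).mono hFK

theorem IsAcyclic.exists_not_reachable_deleteEdges_singleton {S : Set (Sym2 V)} {x y : V}
    (hG : G.IsAcyclic) (hxy : G.Reachable x y) (hS : ¬(G.deleteEdges S).Reachable x y) :
    ∃ f ∈ S, f ∈ G.edgeSet ∧ ¬(G.deleteEdges {f}).Reachable x y := by
  obtain ⟨q⟩ := hxy
  obtain ⟨f, hfS, hfp⟩ := q.bypass.exists_mem_edges_of_not_reachable_deleteEdges hS
  refine ⟨f, hfS, q.bypass.edges_subset_edgeSet hfp, ?_⟩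
  induction f using Sym2.ind with | _ a b =>
  rw [reachable_deleteEdges_iff_exists_walk]
  rintro ⟨r, hr⟩
  have hpath : r.bypass = q.bypass :=
    congrArg Subtype.val <|
      (hG.subsingleton_path x y).elim ⟨_, r.bypass_isPath⟩ ⟨_, q.bypass_isPath⟩
  exact hr (r.edges_bypass_subset_edges (hpath ▸ hfp))

end SimpleGraph

namespace IsMST

open SimpleGraph

variable {V : Type*} [Fintype V] {w : Sym2 V → ℝ} {E T : Finset (Sym2 V)}

theorem weight_le_of_not_reachable_deleteEdges (hT : IsMST w E T) {a b x y : V}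
    (hab : s(a, b) ∈ T) (hxyE : s(x, y) ∈ E)
    (hxy : ¬((fromEdgeSet (↑T : Set (Sym2 V))).deleteEdges {s(a, b)}).Reachable x y) :
    w s(a, b) ≤ w s(x, y) := by
  set T' := insert s(x, y) (T.erase s(a, b))
  have hxyT : s(x, y) ∉ T.erase s(a, b) := by
    have hne : x ≠ y := fun h => hxy (h ▸ .rfl)
    intro h
    obtain ⟨hne', hmem⟩ := Finset.mem_erase.1 h
    exact hxy (Adj.reachable (deleteEdges_adj.2 ⟨(fromEdgeSet_adj _).2 ⟨hmem, hne⟩, hne'⟩))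
  have hgraph : fromEdgeSet (↑T' : Set (Sym2 V)) =
      (fromEdgeSet (↑T : Set (Sym2 V))).deleteEdges {s(a, b)} ⊔ edge x y := by
    ext c d
    simp only [T', Finset.coe_insert, Finset.coe_erase, fromEdgeSet_adj, sup_adj, deleteEdges_adj,
      edge_adj, Set.mem_insert_iff, Set.mem_sdiff, Set.mem_singleton_iff, Sym2.eq_iff]
    tauto
  have hspan : IsSpanningTree E T' :=
    ⟨Finset.insert_subset hxyE ((Finset.erase_subset _ _).trans hT.1.1),
      hgraph ▸ hT.1.2.deleteEdges_sup_edge hxy⟩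
  have hsum := hT.2 T' hspan
  rw [Finset.sum_insert hxyT, Finset.sum_erase_eq_sub hab] at hsum
  linarith

theorem reachable_filter_of_mem (hT : IsMST w E T) {ε : ℝ} {x y : V}
    (hxyE : s(x, y) ∈ E) (hw : w s(x, y) ≤ ε) :
    (fromEdgeSet (↑(T.filter fun e => w e ≤ ε) : Set (Sym2 V))).Reachable x y := by
  have hfilter : fromEdgeSet (↑(T.filter fun e => w e ≤ ε) : Set (Sym2 V)) =
      (fromEdgeSet (↑T : Set (Sym2 V))).deleteEdges {e | ε < w e} := by
    ext c d
    simp only [Finset.coe_filter, fromEdgeSet_adj, deleteEdges_adj, Set.mem_ofPred_eq, not_lt]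
    tauto
  rw [hfilter]
  by_contra h
  obtain ⟨f, hfε, hfT, hsep⟩ :=
    hT.1.2.isAcyclic.exists_not_reachable_deleteEdges_singleton (hT.1.2.connected x y) h
  induction f using Sym2.ind with | _ a b =>
  have := hT.weight_le_of_not_reachable_deleteEdges (edgeSet_fromEdgeSet _ ▸ hfT).1 hxyE hsep
  simp only [Set.mem_ofPred_eq] at hfε
  linarith

end IsMST

/-- Single-linkage hierarchy from the MST: if `T` is a minimum spanning tree of
`(V, E, w)`, then for any threshold `ε` two vertices are connected by edges of `E` of
weight `≤ ε` iff they are connected by edges of `T` of weight `≤ ε`. -/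
theorem single_linkage_from_mst {V : Type*} [Fintype V]
    (w : Sym2 V → ℝ) (E T : Finset (Sym2 V)) (hT : IsMST w E T)
    (ε : ℝ) (u v : V) :
    (SimpleGraph.fromEdgeSet (↑(E.filter fun e => w e ≤ ε) : Set (Sym2 V))).Reachable u v ↔
      (SimpleGraph.fromEdgeSet (↑(T.filter fun e => w e ≤ ε) : Set (Sym2 V))).Reachable u v := by
  refine ⟨SimpleGraph.Reachable.of_forall_adj_reachable fun x y hxy => ?_,
    SimpleGraph.Reachable.mono (SimpleGraph.fromEdgeSet_mono ?_)⟩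
  · obtain ⟨hmem, -⟩ := (SimpleGraph.fromEdgeSet_adj _).1 hxy
    obtain ⟨hE, hw⟩ := Finset.mem_filter.1 hmem
    exact hT.reachable_filter_of_mem hE hw
  · exact Finset.coe_subset.2 (Finset.filter_subset_filter _ hT.1.1)
end
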